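/- arXiv:2309.13422 — 2 statements merged into one kernel-verified Lean document; each statement's English description precedes it below -/
import Mathlib

section
/- Let 0<β<1, let f be integrable on (0,∞) and let g be measurable on (0,∞) with ∫₀^∞ |g(v)| K₀(βv) dv < ∞. Then for every y>0 the factorization equality holds: F_c(f⋆g)(y) = sin(y)·(F_s f)(y)·K[g](y). -/
open MeasureTheory Real Set

/-- The kernel function φ(x,u,v). -/
noncomputable def phiKer (x u v : ℝ) : ℝ :=
  Real.exp (-v * Real.cosh (x + u - 1)) + Real.exp (-v * Real.cosh (x - u + 1))
    - Real.exp (-v * Real.cosh (x + u + 1)) - Real.exp (-v * Real.cosh (x - u - 1))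

/-- The modified Bessel function of the second kind of order zero. -/
noncomputable def K0 (v : ℝ) : ℝ := ∫ t in Set.Ioi (0 : ℝ), Real.exp (-v * Real.cosh t)

/-- The trigonometric-weighted generalized convolution (f ⋆ g). -/
noncomputable def gconv (f g : ℝ → ℝ) (x : ℝ) : ℝ :=
  (1 / 4) * ∫ v in Set.Ioi (0 : ℝ), ∫ u in Set.Ioi (0 : ℝ), phiKer x u v * f u * g v

/-- Fourier cosine transform. -/
noncomputable def Fc (f : ℝ → ℝ) (y : ℝ) : ℝ :=
  Real.sqrt (2 / Real.pi) * ∫ x in Set.Ioi (0 : ℝ), f x * Real.cos (x * y)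

/-- Fourier sine transform. -/
noncomputable def Fs (f : ℝ → ℝ) (y : ℝ) : ℝ :=
  Real.sqrt (2 / Real.pi) * ∫ x in Set.Ioi (0 : ℝ), f x * Real.sin (x * y)

/-- Modified Bessel function K_{iy}(x). -/
noncomputable def Kiy (y x : ℝ) : ℝ :=
  ∫ u in Set.Ioi (0 : ℝ), Real.exp (-x * Real.cosh u) * Real.cos (y * u)

/-- Kontorovich–Lebedev transform. -/
noncomputable def KL (g : ℝ → ℝ) (y : ℝ) : ℝ := ∫ x in Set.Ioi (0 : ℝ), Kiy y x * g x

/-- Fourier cosine convolution. -/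
noncomputable def fcConv (f g : ℝ → ℝ) (x : ℝ) : ℝ :=
  (1 / Real.sqrt (2 * Real.pi)) * ∫ u in Set.Ioi (0 : ℝ), f u * (g |x - u| + g (x + u))

/-- Fourier sine–cosine generalized convolution. -/
noncomputable def fscConv (f g : ℝ → ℝ) (x : ℝ) : ℝ :=
  (1 / Real.sqrt (2 * Real.pi)) * ∫ u in Set.Ioi (0 : ℝ), f u * (g |x - u| - g (x + u))

/-!
With `W_a(x) = exp (-v cosh (x + a)) + exp (-v cosh (x - a))` the kernel splits as
`φ(x, u, v) = W_{u-1}(x) - W_{u+1}(x)`. Because `exp (-v cosh ·)` is even, the half-line integral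
`∫₀^∞ W_a(x) cos (x y) dx` is the whole-line integral of `exp (-v cosh (x + a)) cos (x y)`, and the
shift `x ↦ x - a` turns it into `2 cos (a y) K_{iy}(v)` (the sine part is odd). Hence
`∫₀^∞ φ(x, u, v) cos (x y) dx = 4 sin y sin (u y) K_{iy}(v)`, and the factorization follows by
Fubini, justified by `∫₀^∞ |φ(x, u, v)| dx ≤ 4 K₀(v) ≤ 4 K₀(β v)`.
-/

local notation "μ₊" => volume.restrict (Ioi (0 : ℝ))

lemma sq_div_four_le_cosh (t : ℝ) : t ^ 2 / 4 ≤ cosh t := by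
  rw [← cosh_abs, cosh_eq]
  nlinarith [quadratic_le_exp_of_nonneg (abs_nonneg t), exp_pos (-|t|), sq_abs t, abs_nonneg t]

lemma integrable_exp_neg_mul_cosh {v : ℝ} (hv : 0 < v) :
    Integrable fun t => exp (-v * cosh t) := by
  refine (integrable_exp_neg_mul_sq (by positivity : 0 < v / 4)).mono' (by fun_prop)
    (ae_of_all _ fun t => ?_)
  rw [norm_of_nonneg (exp_pos _).le, exp_le_exp]
  nlinarith [sq_div_four_le_cosh t]

lemma MeasureTheory.Integrable.mul_cos {α : Type*} [MeasurableSpace α] {μ : Measure α}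
    {h c : α → ℝ} (hh : Integrable h μ) (hc : Measurable c) :
    Integrable (fun x => h x * cos (c x)) μ :=
  hh.mul_bdd (by fun_prop) (ae_of_all _ fun x => (norm_eq_abs _).trans_le (abs_cos_le_one _))

lemma MeasureTheory.Integrable.mul_sin {α : Type*} [MeasurableSpace α] {μ : Measure α}
    {h c : α → ℝ} (hh : Integrable h μ) (hc : Measurable c) :
    Integrable (fun x => h x * sin (c x)) μ :=
  hh.mul_bdd (by fun_prop) (ae_of_all _ fun x => (norm_eq_abs _).trans_le (abs_sin_le_one _))

lemma integral_Ioi_add_integral_Ioi_comp_neg {E : Type*} [NormedAddCommGroup E]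
    [NormedSpace ℝ E] {h : ℝ → E} (hh : Integrable h) :
    (∫ x in Ioi 0, h x) + ∫ x in Ioi 0, h (-x) = ∫ x, h x := by
  rw [integral_comp_neg_Ioi, neg_zero, add_comm,
    intervalIntegral.integral_Iic_add_Ioi hh.integrableOn hh.integrableOn]

lemma integral_eq_zero_of_odd {h : ℝ → ℝ} (hodd : ∀ x, h (-x) = -h x) : ∫ x, h x = 0 := by
  have := integral_neg_eq_self h volume
  simp only [hodd, integral_neg] at this
  linarith

section Bessel

variable {v : ℝ}

lemma Kiy_zero : Kiy 0 = K0 := by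
  ext v
  simp [Kiy, K0]

lemma K0_antitoneOn : AntitoneOn K0 (Ioi 0) := fun a ha b _ hab =>
  setIntegral_mono (integrable_exp_neg_mul_cosh (ha.out.trans_le hab)).integrableOn
    (integrable_exp_neg_mul_cosh ha).integrableOn fun t => by
      rw [exp_le_exp]
      nlinarith [one_le_cosh t]

lemma integral_exp_neg_mul_cosh_mul_cos (hv : 0 < v) (y : ℝ) :
    ∫ t, exp (-v * cosh t) * cos (t * y) = 2 * Kiy y v := by
  rw [← integral_Ioi_add_integral_Ioi_comp_neg
    ((integrable_exp_neg_mul_cosh hv).mul_cos (measurable_id'.mul_const y))]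
  simp only [cosh_neg, neg_mul, cos_neg, Kiy, mul_comm y]
  ring

lemma integral_exp_neg_mul_cosh_add_mul_cos (hv : 0 < v) (a y : ℝ) :
    ∫ x, exp (-v * cosh (x + a)) * cos (x * y) = 2 * cos (a * y) * Kiy y v := by
  have hW := integrable_exp_neg_mul_cosh hv
  have hsin : ∫ t, exp (-v * cosh t) * sin (t * y) = 0 :=
    integral_eq_zero_of_odd fun t => by simp only [cosh_neg, neg_mul, sin_neg, mul_neg]
  calc ∫ x, exp (-v * cosh (x + a)) * cos (x * y)
      = ∫ t, exp (-v * cosh t) * cos ((t - a) * y) := by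
        simpa using integral_add_right_eq_self (fun t => exp (-v * cosh t) * cos ((t - a) * y)) a
    _ = ∫ t, cos (a * y) * (exp (-v * cosh t) * cos (t * y))
          + sin (a * y) * (exp (-v * cosh t) * sin (t * y)) := by
        congr with t
        rw [sub_mul, cos_sub]
        ring
    _ = 2 * cos (a * y) * Kiy y v := by
        rw [integral_add ((hW.mul_cos (measurable_id'.mul_const y)).const_mul _)
            ((hW.mul_sin (measurable_id'.mul_const y)).const_mul _),
          integral_const_mul, integral_const_mul, integral_exp_neg_mul_cosh_mul_cos hv, hsin]
        ring

noncomputable def coshPair (v a x : ℝ) : ℝ := exp (-v * cosh (x + a)) + exp (-v * cosh (x - a))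

lemma coshPair_nonneg (v a x : ℝ) : 0 ≤ coshPair v a x := by
  unfold coshPair
  positivity

lemma integrableOn_coshPair (hv : 0 < v) (a : ℝ) : IntegrableOn (coshPair v a) (Ioi 0) :=
  ((integrable_exp_neg_mul_cosh hv).comp_add_right a).integrableOn.add
    ((integrable_exp_neg_mul_cosh hv).comp_sub_right a).integrableOn

lemma integral_coshPair_mul_cos (hv : 0 < v) (a y : ℝ) :
    ∫ x in Ioi 0, coshPair v a x * cos (x * y) = 2 * cos (a * y) * Kiy y v := by
  have hshift := ((integrable_exp_neg_mul_cosh hv).comp_add_right a).mul_cos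
    (measurable_id'.mul_const y)
  rw [← integral_exp_neg_mul_cosh_add_mul_cos hv a y,
    ← integral_Ioi_add_integral_Ioi_comp_neg hshift, ← integral_add hshift.integrableOn
      (hshift.comp_neg (μ := volume)).integrableOn]
  refine setIntegral_congr_fun measurableSet_Ioi fun x _ => ?_
  rw [coshPair, neg_mul x, cos_neg, neg_add_eq_sub, ← cosh_neg (a - x), neg_sub, add_mul]

lemma integral_coshPair (hv : 0 < v) (a : ℝ) : ∫ x in Ioi 0, coshPair v a x = 2 * K0 v := by
  simpa [Kiy_zero] using integral_coshPair_mul_cos hv a 0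

lemma phiKer_eq_coshPair_sub (x u v : ℝ) :
    phiKer x u v = coshPair v (u - 1) x - coshPair v (u + 1) x := by
  simp only [phiKer, coshPair]
  ring_nf

lemma integral_phiKer_mul_cos (hv : 0 < v) (u y : ℝ) :
    ∫ x in Ioi 0, phiKer x u v * cos (x * y) = 4 * sin y * sin (u * y) * Kiy y v := by
  simp_rw [phiKer_eq_coshPair_sub, sub_mul]
  rw [integral_sub ((integrableOn_coshPair hv _).mul_cos (measurable_id'.mul_const y))
      ((integrableOn_coshPair hv _).mul_cos (measurable_id'.mul_const y)),
    integral_coshPair_mul_cos hv, integral_coshPair_mul_cos hv, sub_mul, add_mul, one_mul,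
    cos_sub, cos_add]
  ring

lemma integrableOn_phiKer (hv : 0 < v) (u : ℝ) :
    IntegrableOn (fun x => phiKer x u v) (Ioi 0) := by
  simp_rw [phiKer_eq_coshPair_sub]
  exact (integrableOn_coshPair hv _).sub (integrableOn_coshPair hv _)

lemma integral_abs_phiKer_le (hv : 0 < v) (u : ℝ) :
    ∫ x in Ioi 0, |phiKer x u v| ≤ 4 * K0 v := by
  have hP := integrableOn_coshPair hv
  calc ∫ x in Ioi 0, |phiKer x u v|
      ≤ ∫ x in Ioi 0, coshPair v (u - 1) x + coshPair v (u + 1) x :=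
        setIntegral_mono (integrableOn_phiKer hv u).abs ((hP _).add (hP _)) fun x => by
          rw [phiKer_eq_coshPair_sub]
          exact (abs_sub _ _).trans_eq <| by
            rw [abs_of_nonneg (coshPair_nonneg ..), abs_of_nonneg (coshPair_nonneg ..)]
    _ = 4 * K0 v := by
        rw [integral_add (hP _) (hP _), integral_coshPair hv, integral_coshPair hv]
        ring

end Bessel

section Fubini

variable {f : ℝ → ℝ} {v : ℝ}

lemma integral_norm_phiKer_mul_le (hv : 0 < v) (u : ℝ) :
    ∫ x in Ioi 0, ‖phiKer x u v * f u‖ ≤ 4 * K0 v * |f u| := by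
  simp only [norm_mul, norm_eq_abs]
  rw [integral_mul_const]
  exact mul_le_mul_of_nonneg_right (integral_abs_phiKer_le hv u) (abs_nonneg _)

lemma integrable_phiKer_mul (hf : IntegrableOn f (Ioi 0)) (hv : 0 < v) :
    Integrable (fun p : ℝ × ℝ => phiKer p.1 p.2 v * f p.2) (μ₊.prod μ₊) := by
  have hmeas : AEStronglyMeasurable (fun p : ℝ × ℝ => phiKer p.1 p.2 v * f p.2) (μ₊.prod μ₊) :=
    (Continuous.aestronglyMeasurable (by unfold phiKer; fun_prop)).mul
      hf.aestronglyMeasurable.comp_snd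
  refine (integrable_prod_iff' hmeas).2
    ⟨ae_of_all _ fun u => (integrableOn_phiKer hv u).mul_const (f u), ?_⟩
  refine (hf.abs.const_mul (4 * K0 v)).mono' hmeas.norm.prod_swap.integral_prod_right'
    (ae_of_all _ fun u => ?_)
  rw [norm_of_nonneg (integral_nonneg fun _ => norm_nonneg _)]
  exact integral_norm_phiKer_mul_le hv u

lemma integral_abs_integral_phiKer_mul_le (hf : IntegrableOn f (Ioi 0)) (hv : 0 < v) :
    ∫ x in Ioi 0, |∫ u in Ioi 0, phiKer x u v * f u| ≤ 4 * K0 v * ∫ u in Ioi 0, |f u| := by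
  have hP := integrable_phiKer_mul hf hv
  calc ∫ x in Ioi 0, |∫ u in Ioi 0, phiKer x u v * f u|
      ≤ ∫ x in Ioi 0, ∫ u in Ioi 0, ‖phiKer x u v * f u‖ :=
        integral_mono hP.integral_prod_left.abs hP.integral_norm_prod_left
          fun _ => (norm_eq_abs _).symm.trans_le (norm_integral_le_integral_norm _)
    _ = ∫ u in Ioi 0, ∫ x in Ioi 0, ‖phiKer x u v * f u‖ := integral_integral_swap hP.norm
    _ ≤ ∫ u in Ioi 0, 4 * K0 v * |f u| :=
        integral_mono hP.integral_norm_prod_right (hf.abs.const_mul _)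
          (integral_norm_phiKer_mul_le hv)
    _ = 4 * K0 v * ∫ u in Ioi 0, |f u| := integral_const_mul _ _

lemma integral_integral_phiKer_mul_mul_cos (hf : IntegrableOn f (Ioi 0)) (hv : 0 < v) (y : ℝ) :
    ∫ x in Ioi 0, (∫ u in Ioi 0, phiKer x u v * f u) * cos (x * y)
      = 4 * sin y * Kiy y v * ∫ u in Ioi 0, f u * sin (u * y) := by
  calc ∫ x in Ioi 0, (∫ u in Ioi 0, phiKer x u v * f u) * cos (x * y)
      = ∫ x in Ioi 0, ∫ u in Ioi 0, phiKer x u v * f u * cos (x * y) := by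
        simp_rw [integral_mul_const]
    _ = ∫ u in Ioi 0, ∫ x in Ioi 0, phiKer x u v * f u * cos (x * y) :=
        integral_integral_swap
          ((integrable_phiKer_mul hf hv).mul_cos (measurable_fst.mul_const y))
    _ = ∫ u in Ioi 0, 4 * sin y * Kiy y v * (f u * sin (u * y)) := by
        refine integral_congr_ae (ae_of_all _ fun u => ?_)
        simp_rw [mul_right_comm _ (f u), integral_mul_const, integral_phiKer_mul_cos hv]
        ring
    _ = 4 * sin y * Kiy y v * ∫ u in Ioi 0, f u * sin (u * y) := integral_const_mul _ _

lemma integrable_gconv_integrand {β : ℝ} (hβ₀ : 0 < β) (hβ₁ : β ≤ 1) {g : ℝ → ℝ}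
    (hf : IntegrableOn f (Ioi 0)) (hg : Measurable g)
    (hgK : IntegrableOn (fun v => |g v| * K0 (β * v)) (Ioi 0)) (y : ℝ) :
    Integrable (fun p : ℝ × ℝ => (∫ u in Ioi 0, phiKer p.1 u p.2 * f u) * g p.2 * cos (p.1 * y))
      (μ₊.prod μ₊) := by
  have hmeas : AEStronglyMeasurable
      (fun p : ℝ × ℝ => (∫ u in Ioi 0, phiKer p.1 u p.2 * f u) * g p.2 * cos (p.1 * y))
      (μ₊.prod μ₊) := by
    refine (AEStronglyMeasurable.integral_prod_right'
        (f := fun q : (ℝ × ℝ) × ℝ => phiKer q.1.1 q.2 q.1.2 * f q.2) ?_).mul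
      (hg.comp measurable_snd).aestronglyMeasurable |>.mul
      (Continuous.aestronglyMeasurable (by fun_prop))
    exact (Continuous.aestronglyMeasurable (by unfold phiKer; fun_prop)).mul
      hf.aestronglyMeasurable.comp_snd
  refine (integrable_prod_iff' hmeas).2 ⟨?_, ?_⟩
  · filter_upwards [ae_restrict_mem measurableSet_Ioi] with v hv
    exact ((integrable_phiKer_mul hf hv).integral_prod_left.mul_const (g v)).mul_cos
      (measurable_id'.mul_const y)
  refine (hgK.const_mul (4 * ∫ u in Ioi 0, |f u|)).mono'
    hmeas.norm.prod_swap.integral_prod_right' ?_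
  filter_upwards [ae_restrict_mem measurableSet_Ioi] with v hv
  have hK : K0 v ≤ K0 (β * v) :=
    K0_antitoneOn (mul_pos hβ₀ hv) hv (mul_le_of_le_one_left hv.out.le hβ₁)
  rw [norm_of_nonneg (integral_nonneg fun _ => norm_nonneg _)]
  calc ∫ x in Ioi 0, ‖(∫ u in Ioi 0, phiKer x u v * f u) * g v * cos (x * y)‖
      ≤ ∫ x in Ioi 0, |∫ u in Ioi 0, phiKer x u v * f u| * |g v| :=
        integral_mono_of_nonneg (ae_of_all _ fun _ => norm_nonneg _)
          ((integrable_phiKer_mul hf hv).integral_prod_left.abs.mul_const _)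
          (ae_of_all _ fun x => by
            dsimp only
            rw [norm_mul, norm_mul, norm_eq_abs, norm_eq_abs, norm_eq_abs]
            exact mul_le_of_le_one_right (by positivity) (abs_cos_le_one _))
    _ ≤ 4 * K0 v * (∫ u in Ioi 0, |f u|) * |g v| := by
        rw [integral_mul_const]
        gcongr
        exact integral_abs_integral_phiKer_mul_le hf hv
    _ = 4 * (∫ u in Ioi 0, |f u|) * (|g v| * K0 v) := by ring
    _ ≤ 4 * (∫ u in Ioi 0, |f u|) * (|g v| * K0 (β * v)) := by
        have : 0 ≤ ∫ u in Ioi 0, |f u| := integral_nonneg fun _ => abs_nonneg _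
        gcongr

end Fubini

theorem gconv_factorization_general (β : ℝ) (hβ : β ∈ Set.Ioo (0 : ℝ) 1) (f g : ℝ → ℝ)
    (hf : MeasureTheory.IntegrableOn f (Set.Ioi 0))
    (hg : Measurable g)
    (hgK : MeasureTheory.IntegrableOn (fun v => |g v| * K0 (β * v)) (Set.Ioi 0))
    (y : ℝ) :
    Fc (gconv f g) y = Real.sin y * Fs f y * KL g y := by
  have hgconv : ∀ x, gconv f g x * cos (x * y)
      = 1 / 4 * ∫ v in Ioi 0, (∫ u in Ioi 0, phiKer x u v * f u) * g v * cos (x * y) := by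
    intro x
    simp only [gconv, ← integral_mul_const, mul_assoc]
  have hinner : ∀ᵐ v ∂μ₊, ∫ x in Ioi 0, (∫ u in Ioi 0, phiKer x u v * f u) * g v * cos (x * y)
      = 4 * sin y * (∫ u in Ioi 0, f u * sin (u * y)) * (Kiy y v * g v) := by
    filter_upwards [ae_restrict_mem measurableSet_Ioi] with v hv
    simp_rw [mul_right_comm _ (g v), integral_mul_const,
      integral_integral_phiKer_mul_mul_cos hf hv]
    ring
  have hswap := integral_integral_swap
    (f := fun x v => (∫ u in Ioi 0, phiKer x u v * f u) * g v * cos (x * y))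
    (integrable_gconv_integrand hβ.1 hβ.2.le hf hg hgK y)
  rw [Fc, Fs, KL]
  simp_rw [hgconv]
  rw [integral_const_mul, hswap, integral_congr_ae hinner, integral_const_mul]
  ring

theorem gconv_factorization (β : ℝ) (hβ : β ∈ Set.Ioo (0 : ℝ) 1) (f g : ℝ → ℝ)
    (hf : MeasureTheory.IntegrableOn f (Set.Ioi 0))
    (hg : Measurable g)
    (hgK : MeasureTheory.IntegrableOn (fun v => |g v| * K0 (β * v)) (Set.Ioi 0))
    (y : ℝ) (hy : 0 < y) :
    Fc (gconv f g) y = Real.sin y * Fs f y * KL g y :=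
  gconv_factorization_general β hβ f g hf hg hgK y
end

section
/- Let 0<β<1, let f be integrable on (0,∞) and let g be measurable on (0,∞) with ∫₀^∞ |g(v)| K₀(βv) dv < ∞. Then the function x ↦ (f⋆g)(x) is continuous and bounded on (0,∞) and tends to 0 as x → ∞. -/
open MeasureTheory Real Set

open Filter Topology

/-!
For `v > 0` every term of `φ(x, u, v)` lies in `(0, e^{-v}]`, so `|φ(x, u, v) f(u) g(v)|` is
dominated by `2 |f(u)| e^{-v} |g(v)|`, which is integrable on `(0, ∞)²` as soon as `f` and
`v ↦ e^{-v} g(v)` are. When `0 < β < 1` the latter follows from `∫ |g(v)| K₀(βv) dv < ∞`, because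
`K₀(βv) ≥ δ e^{-v}` with `δ = arcosh (1/β)`. Dominated convergence in `x` then gives continuity,
and, since `φ(x, u, v) → 0` as `x → ∞`, the decay at infinity; the domination also bounds `f ⋆ g`
by `½ ‖f‖₁ ‖e^{-v} g‖₁`.
-/

theorem self_le_cosh (x : ℝ) : x ≤ cosh x := by
  rcases le_total 0 x with hx | hx
  · exact (self_le_sinh_iff.2 hx).trans (sinh_lt_cosh x).le
  · linarith [one_le_cosh x]

theorem integrableOn_exp_neg_mul_cosh {a : ℝ} (ha : 0 < a) :
    IntegrableOn (fun t => exp (-a * cosh t)) (Ioi 0) := by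
  refine (exp_neg_integrableOn_Ioi 0 ha).mono' (by fun_prop) (.of_forall fun t => ?_)
  rw [norm_of_nonneg (exp_pos _).le]
  exact exp_le_exp.2 (by nlinarith [self_le_cosh t])

theorem mul_exp_neg_mul_cosh_le_K0 {a δ : ℝ} (ha : 0 < a) (hδ : 0 ≤ δ) :
    δ * exp (-a * cosh δ) ≤ K0 a := by
  have hint := integrableOn_exp_neg_mul_cosh ha
  have hmono : ∀ t ∈ Ioc 0 δ, exp (-a * cosh δ) ≤ exp (-a * cosh t) := by
    rintro t ⟨ht0, htδ⟩
    have : cosh t ≤ cosh δ := cosh_le_cosh.2 (by rwa [abs_of_pos ht0, abs_of_nonneg hδ])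
    exact exp_le_exp.2 (by nlinarith)
  calc δ * exp (-a * cosh δ)
      = exp (-a * cosh δ) * volume.real (Ioc 0 δ) := by simp [hδ, mul_comm]
    _ ≤ ∫ t in Ioc 0 δ, exp (-a * cosh t) :=
        setIntegral_ge_of_const_le_real measurableSet_Ioc measure_Ioc_lt_top.ne hmono
          (hint.mono_set Ioc_subset_Ioi_self)
    _ ≤ K0 a := setIntegral_mono_set hint (.of_forall fun _ => (exp_pos _).le)
        Ioc_subset_Ioi_self.eventuallyLE

theorem exists_pos_mul_exp_neg_le_K0 {β : ℝ} (hβ : β ∈ Ioo 0 1) :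
    ∃ c > 0, ∀ v > 0, c * exp (-v) ≤ K0 (β * v) := by
  obtain ⟨hβ0, hβ1⟩ := hβ
  have h1 : 1 < β⁻¹ := one_lt_inv_iff₀.2 ⟨hβ0, hβ1⟩
  refine ⟨arcosh β⁻¹, arcosh_pos h1, fun v hv => ?_⟩
  have hcosh : β * v * cosh (arcosh β⁻¹) = v := by
    rw [cosh_arcosh h1.le]; field_simp
  simpa [hcosh] using mul_exp_neg_mul_cosh_le_K0 (mul_pos hβ0 hv) (arcosh_pos h1).le

theorem integrableOn_exp_neg_mul_of_integrableOn_abs_mul_K0 {β : ℝ} (hβ : β ∈ Ioo 0 1)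
    {g : ℝ → ℝ} (hg : AEStronglyMeasurable g (volume.restrict (Ioi 0)))
    (hgK : IntegrableOn (fun v => |g v| * K0 (β * v)) (Ioi 0)) :
    IntegrableOn (fun v => exp (-v) * g v) (Ioi 0) := by
  obtain ⟨c, hc, hK⟩ := exists_pos_mul_exp_neg_le_K0 hβ
  refine (hgK.const_mul c⁻¹).mono' (by fun_prop) ?_
  filter_upwards [ae_restrict_mem measurableSet_Ioi] with v (hv : 0 < v)
  rw [norm_mul, norm_of_nonneg (exp_pos _).le, Real.norm_eq_abs, le_inv_mul_iff₀ hc]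
  nlinarith [hK v hv, abs_nonneg (g v)]

theorem abs_phiKer_le (x u : ℝ) {v : ℝ} (hv : 0 ≤ v) : |phiKer x u v| ≤ 2 * exp (-v) := by
  have key (w : ℝ) : exp (-v * cosh w) ≤ exp (-v) := exp_le_exp.2 (by nlinarith [one_le_cosh w])
  have := exp_pos (-v * cosh (x + u - 1))
  have := exp_pos (-v * cosh (x - u + 1))
  have := exp_pos (-v * cosh (x + u + 1))
  have := exp_pos (-v * cosh (x - u - 1))
  rw [phiKer, abs_le]
  constructor <;> linarith [key (x + u - 1), key (x - u + 1), key (x + u + 1), key (x - u - 1)]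

theorem tendsto_exp_neg_mul_cosh_add_atTop {v : ℝ} (hv : 0 < v) (c : ℝ) :
    Tendsto (fun x => exp (-v * cosh (x + c))) atTop (𝓝 0) := by
  have hcosh : Tendsto cosh atTop atTop := tendsto_atTop_mono self_le_cosh tendsto_id
  exact tendsto_exp_atBot.comp <|
    (hcosh.comp (tendsto_atTop_add_const_right _ c tendsto_id)).const_mul_atTop_of_neg (by linarith)

theorem tendsto_phiKer_atTop (u : ℝ) {v : ℝ} (hv : 0 < v) :
    Tendsto (fun x => phiKer x u v) atTop (𝓝 0) := by
  have h := (((tendsto_exp_neg_mul_cosh_add_atTop hv (u - 1)).add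
    (tendsto_exp_neg_mul_cosh_add_atTop hv (1 - u))).sub
    (tendsto_exp_neg_mul_cosh_add_atTop hv (u + 1))).sub
    (tendsto_exp_neg_mul_cosh_add_atTop hv (-u - 1))
  simp only [add_zero, sub_zero] at h
  convert h using 2 with x
  simp only [phiKer]
  ring_nf

local notation "μ₊" => Measure.prod (volume.restrict (Ioi (0 : ℝ))) (volume.restrict (Ioi (0 : ℝ)))

section GConv

variable {f g : ℝ → ℝ}

theorem ae_fst_pos : ∀ᵐ p ∂μ₊, 0 < p.1 := by
  rw [Measure.prod_restrict]
  filter_upwards [ae_restrict_mem (measurableSet_Ioi.prod measurableSet_Ioi)] with p hp using hp.1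

theorem aestronglyMeasurable_gconv_integrand (hf : IntegrableOn f (Ioi 0))
    (hg : IntegrableOn (fun v => exp (-v) * g v) (Ioi 0)) (x : ℝ) :
    AEStronglyMeasurable (fun p : ℝ × ℝ => phiKer x p.2 p.1 * f p.2 * g p.1) μ₊ := by
  have hg' : AEStronglyMeasurable g (volume.restrict (Ioi 0)) := by
    refine (continuous_exp.aestronglyMeasurable.mul hg.1).congr (.of_forall fun v => ?_)
    simp [← mul_assoc, ← exp_add]
  have hphi : Continuous fun p : ℝ × ℝ => phiKer x p.2 p.1 := by unfold phiKer; fun_prop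
  exact (hphi.aestronglyMeasurable.mul hf.1.comp_snd).mul hg'.comp_fst

theorem norm_gconv_integrand_le (x : ℝ) :
    ∀ᵐ p ∂μ₊, ‖phiKer x p.2 p.1 * f p.2 * g p.1‖ ≤ 2 * ‖exp (-p.1) * g p.1‖ * ‖f p.2‖ := by
  filter_upwards [ae_fst_pos] with p hv
  simp only [norm_mul, Real.norm_eq_abs, abs_of_pos (exp_pos _)]
  calc |phiKer x p.2 p.1| * |f p.2| * |g p.1| ≤ 2 * exp (-p.1) * |f p.2| * |g p.1| := by
        gcongr; exact abs_phiKer_le x p.2 hv.le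
    _ = 2 * (exp (-p.1) * |g p.1|) * |f p.2| := by ring

theorem integrable_gconv_bound (hf : IntegrableOn f (Ioi 0))
    (hg : IntegrableOn (fun v => exp (-v) * g v) (Ioi 0)) :
    Integrable (fun p : ℝ × ℝ => 2 * ‖exp (-p.1) * g p.1‖ * ‖f p.2‖) μ₊ :=
  (hg.norm.const_mul 2).mul_prod hf.norm

theorem gconv_eq_integral_prod (hf : IntegrableOn f (Ioi 0))
    (hg : IntegrableOn (fun v => exp (-v) * g v) (Ioi 0)) (x : ℝ) :
    gconv f g x = 1 / 4 * ∫ p, phiKer x p.2 p.1 * f p.2 * g p.1 ∂μ₊ := by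
  rw [gconv, integral_prod _ ((integrable_gconv_bound hf hg).mono'
    (aestronglyMeasurable_gconv_integrand hf hg x) (norm_gconv_integrand_le x))]

theorem continuous_gconv (hf : IntegrableOn f (Ioi 0))
    (hg : IntegrableOn (fun v => exp (-v) * g v) (Ioi 0)) : Continuous (gconv f g) := by
  rw [funext (gconv_eq_integral_prod hf hg)]
  refine continuous_const.mul (continuous_of_dominated (aestronglyMeasurable_gconv_integrand hf hg)
    norm_gconv_integrand_le (integrable_gconv_bound hf hg) (.of_forall fun p => ?_))
  unfold phiKer; fun_prop

theorem abs_gconv_le (hf : IntegrableOn f (Ioi 0))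
    (hg : IntegrableOn (fun v => exp (-v) * g v) (Ioi 0)) (x : ℝ) :
    |gconv f g x| ≤ 1 / 2 * ((∫ v in Ioi 0, ‖exp (-v) * g v‖) * ∫ u in Ioi 0, ‖f u‖) := by
  calc |gconv f g x| = 1 / 4 * ‖∫ p, phiKer x p.2 p.1 * f p.2 * g p.1 ∂μ₊‖ := by
        rw [gconv_eq_integral_prod hf hg, abs_mul, abs_of_pos (by norm_num), Real.norm_eq_abs]
    _ ≤ 1 / 4 * ∫ p, 2 * ‖exp (-p.1) * g p.1‖ * ‖f p.2‖ ∂μ₊ := by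
        gcongr
        exact norm_integral_le_of_norm_le (integrable_gconv_bound hf hg) (norm_gconv_integrand_le x)
    _ = 1 / 2 * ((∫ v in Ioi 0, ‖exp (-v) * g v‖) * ∫ u in Ioi 0, ‖f u‖) := by
        rw [← integral_prod_mul (fun v => ‖exp (-v) * g v‖) (fun u => ‖f u‖)]
        simp only [mul_assoc, integral_const_mul]
        ring

theorem tendsto_gconv_atTop (hf : IntegrableOn f (Ioi 0))
    (hg : IntegrableOn (fun v => exp (-v) * g v) (Ioi 0)) :
    Tendsto (gconv f g) atTop (𝓝 0) := by
  have hlim : ∀ᵐ p ∂μ₊, Tendsto (fun x => phiKer x p.2 p.1 * f p.2 * g p.1) atTop (𝓝 0) := by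
    filter_upwards [ae_fst_pos] with p hv
    simpa using ((tendsto_phiKer_atTop p.2 hv).mul_const (f p.2)).mul_const (g p.1)
  have h := tendsto_integral_filter_of_dominated_convergence _
    (.of_forall (aestronglyMeasurable_gconv_integrand hf hg))
    (.of_forall norm_gconv_integrand_le) (integrable_gconv_bound hf hg) hlim
  rw [funext (gconv_eq_integral_prod hf hg)]
  simpa using h.const_mul (1 / 4 : ℝ)

end GConv

theorem gconv_C0 (β : ℝ) (hβ : β ∈ Set.Ioo (0 : ℝ) 1) (f g : ℝ → ℝ)
    (hf : MeasureTheory.IntegrableOn f (Set.Ioi 0))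
    (hg : Measurable g)
    (hgK : MeasureTheory.IntegrableOn (fun v => |g v| * K0 (β * v)) (Set.Ioi 0)) :
    ContinuousOn (gconv f g) (Set.Ioi 0) ∧
    (∃ M : ℝ, ∀ x ∈ Set.Ioi (0 : ℝ), |gconv f g x| ≤ M) ∧
    Filter.Tendsto (gconv f g) Filter.atTop (nhds 0) := by
  have hg' := integrableOn_exp_neg_mul_of_integrableOn_abs_mul_K0 hβ hg.aestronglyMeasurable hgK
  exact ⟨(continuous_gconv hf hg').continuousOn, ⟨_, fun x _ => abs_gconv_le hf hg' x⟩,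
    tendsto_gconv_atTop hf hg'⟩
end
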